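/- Let L > 0 and let ψ : ℝ → ℝ be a C², L-periodic function with ψ(x) > 0 for all x, satisfying ψ''(x) − ψ(x) + ψ(x)² = 0 for all x ∈ ℝ. Then there exist C¹, L-periodic functions f, g : ℝ → ℝ such that Q_R(f, g) = ∫₀^L [ 2( f'(x)² + f(x)² − ψ(x) f(x)² ) − 4ψ(x) f(x) g(x) + g'(x)² + g(x)² ] dx < 0. (That is, the linearized operator A_R possesses a negative direction, hence a negative eigenvalue.) -/

import Mathlib

open intervalIntegral MeasureTheory

/-- The quadratic form `Q_R` of the linearized operator `A_R` at the cnoidal standing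
wave possesses a negative direction among `C¹`, `L`-periodic pairs `(f, g)`. -/
theorem stmt_14 (L : ℝ) (hL : 0 < L) (ψ : ℝ → ℝ)
    (hψ : ContDiff ℝ 2 ψ) (hper : Function.Periodic ψ L) (hpos : ∀ x, 0 < ψ x)
    (hode : ∀ x, deriv (deriv ψ) x - ψ x + ψ x ^ 2 = 0) :
    ∃ f g : ℝ → ℝ, ContDiff ℝ 1 f ∧ Function.Periodic f L ∧
      ContDiff ℝ 1 g ∧ Function.Periodic g L ∧
      (∫ x in (0 : ℝ)..L,
        (2 * (deriv f x ^ 2 + f x ^ 2 - ψ x * f x ^ 2) -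
          4 * ψ x * f x * g x + deriv g x ^ 2 + g x ^ 2)) < 0 := by
  have h21 : (2 : ℕ∞) = 1 + 1 := by norm_num
  have hψ1 : ContDiff ℝ 1 ψ := hψ.of_le (by norm_num)
  have hd1 : Differentiable ℝ ψ := hψ1.differentiable one_ne_zero
  have hdd : ContDiff ℝ 1 (deriv ψ) :=
    (contDiff_succ_iff_deriv.mp (show ContDiff ℝ (1 + 1) ψ by exact_mod_cast hψ)).2.2
  have hd2 : Differentiable ℝ (deriv ψ) := hdd.differentiable one_ne_zero
  have hcψ : Continuous ψ := hd1.continuous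
  have hcψ' : Continuous (deriv ψ) := hd2.continuous
  have hcψ'' : Continuous (deriv (deriv ψ)) := (contDiff_one_iff_deriv.mp hdd).2
  refine ⟨ψ, ψ, hψ1, hper, hψ1, hper, ?_⟩
  -- the integrand equals 3ψ'² + 3ψ² − 6ψ³
  have hcongr : (∫ x in (0 : ℝ)..L,
      (2 * (deriv ψ x ^ 2 + ψ x ^ 2 - ψ x * ψ x ^ 2) -
        4 * ψ x * ψ x * ψ x + deriv ψ x ^ 2 + ψ x ^ 2)) =
      ∫ x in (0 : ℝ)..L, (3 * deriv ψ x ^ 2 + 3 * ψ x ^ 2 - 6 * ψ x ^ 3) := by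
    apply intervalIntegral.integral_congr
    intro x _
    ring
  rw [hcongr]
  -- integrability facts
  have hint1 : IntervalIntegrable (fun x => deriv ψ x ^ 2) volume 0 L :=
    ((hcψ'.pow 2)).intervalIntegrable 0 L
  have hint2 : IntervalIntegrable (fun x => ψ x ^ 2) volume 0 L :=
    ((hcψ.pow 2)).intervalIntegrable 0 L
  have hint3 : IntervalIntegrable (fun x => ψ x ^ 3) volume 0 L :=
    ((hcψ.pow 3)).intervalIntegrable 0 L
  have hintψ' : IntervalIntegrable (deriv ψ) volume 0 L :=
    hcψ'.intervalIntegrable 0 L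
  have hintψ'' : IntervalIntegrable (deriv (deriv ψ)) volume 0 L :=
    hcψ''.intervalIntegrable 0 L
  set I1 := ∫ x in (0 : ℝ)..L, deriv ψ x ^ 2 with hI1
  set I2 := ∫ x in (0 : ℝ)..L, ψ x ^ 2 with hI2
  set I3 := ∫ x in (0 : ℝ)..L, ψ x ^ 3 with hI3
  -- split the integral
  have hsplit : (∫ x in (0 : ℝ)..L,
      (3 * deriv ψ x ^ 2 + 3 * ψ x ^ 2 - 6 * ψ x ^ 3)) = 3 * I1 + 3 * I2 - 6 * I3 := by
    rw [intervalIntegral.integral_sub (((hint1.const_mul 3)).add (hint2.const_mul 3))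
        (hint3.const_mul 6),
      intervalIntegral.integral_add (hint1.const_mul 3) (hint2.const_mul 3),
      intervalIntegral.integral_const_mul, intervalIntegral.integral_const_mul,
      intervalIntegral.integral_const_mul]
  rw [hsplit]
  -- boundary values
  have hbψ : ψ L = ψ 0 := by have := hper 0; simpa using this
  have hbψ' : deriv ψ L = deriv ψ 0 := by
    have h1 : HasDerivAt (fun x => ψ (x + L)) (deriv ψ L) 0 := by
      have := ((hd1 (0 + L)).hasDerivAt).comp 0 ((hasDerivAt_id 0).add_const L)
      simpa [Function.comp_def] using this
    have heq : (fun x => ψ (x + L)) = ψ := funext hper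
    rw [heq] at h1
    exact h1.deriv.symm
  -- integration by parts : ∫ ψ ψ'' = ψψ'|₀ᴸ − ∫ ψ'²
  have hibp : (∫ x in (0 : ℝ)..L, ψ x * deriv (deriv ψ) x) =
      ψ L * deriv ψ L - ψ 0 * deriv ψ 0 - ∫ x in (0 : ℝ)..L, deriv ψ x * deriv ψ x := by
    exact intervalIntegral.integral_mul_deriv_eq_deriv_mul
      (fun x _ => (hd1 x).hasDerivAt) (fun x _ => (hd2 x).hasDerivAt) hintψ' hintψ''
  have hsq : (∫ x in (0 : ℝ)..L, deriv ψ x * deriv ψ x) = I1 := by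
    apply intervalIntegral.integral_congr; intro x _; ring
  have hode' : (∫ x in (0 : ℝ)..L, ψ x * deriv (deriv ψ) x) = I2 - I3 := by
    rw [hI2, hI3, ← intervalIntegral.integral_sub hint2 hint3]
    apply intervalIntegral.integral_congr
    intro x _
    have := hode x
    have h2 : deriv (deriv ψ) x = ψ x - ψ x ^ 2 := by linarith
    show ψ x * deriv (deriv ψ) x = ψ x ^ 2 - ψ x ^ 3
    rw [h2]; ring
  have hI1eq : I1 = I3 - I2 := by
    rw [hsq, hbψ, hbψ'] at hibp
    rw [hode'] at hibp
    linarith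
  -- positivity of ∫ ψ³
  have hI3pos : 0 < I3 := by
    refine intervalIntegral.intervalIntegral_pos_of_pos ?_ ?_ hL
    · exact hint3
    · intro x; simpa using pow_pos (hpos x) 3
  rw [hI1eq]
  linarith
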